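/- For n ≥ 1: (a) {A_z : z ∈ A_n} is an R-basis of the alternating Hecke algebra A_n(q) = H^+; (b) {A_z : z ∈ S_n ∖ A_n} is an R-basis of H^−; (c) as an R-module, H_n = H^+ ⊕ H^−. -/

import Mathlib

open scoped Classical

noncomputable section

/-- The simple transposition swapping `i` and `i+1` (0-indexed; this is the Coxeter
generator `s_{i+1}` in 1-indexed notation) in the symmetric group on `Fin n`. -/
def sTr (n i : ℕ) : Equiv.Perm (Fin n) :=
  if h : i + 1 < n then Equiv.swap ⟨i, Nat.lt_of_succ_lt h⟩ ⟨i + 1, h⟩ else 1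

/-- The Coxeter length: the minimal length of an expression of `w` as a product of
simple transpositions. -/
def len (n : ℕ) (w : Equiv.Perm (Fin n)) : ℕ :=
  sInf {k | ∃ l : List ℕ, l.length = k ∧ (∀ i ∈ l, i + 1 < n) ∧ w = (l.map (sTr n)).prod}

/-- The (strict) Bruhat order on the symmetric group: `y < z` iff `z` can be obtained
from `y` by successively multiplying by reflections, increasing the length at each step. -/
def bruhatLT (n : ℕ) (y z : Equiv.Perm (Fin n)) : Prop :=
  Relation.TransGen
    (fun a b => (∃ u v : Fin n, u ≠ v ∧ b = a * Equiv.swap u v) ∧ len n a < len n b) y z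

/-- `y ≺ z` iff `y < z` in the Bruhat order and `ℓ(y) ≢ ℓ(z) (mod 2)`. -/
def precLT (n : ℕ) (y z : Equiv.Perm (Fin n)) : Prop :=
  bruhatLT n y z ∧ ¬ (len n y % 2 = len n z % 2)

/-- The element `A_z = ½(T_z + ε_z T_z^#)`. -/
def Aelt {R H : Type*} [CommRing R] [Ring H] [Algebra R H] (n : ℕ)
    (T : Equiv.Perm (Fin n) → H) (hash : H ≃ₐ[R] H) (z : Equiv.Perm (Fin n)) : H :=
  Ring.inverse (2 : R) • (T z + ((-1 : R) ^ len n z) • hash (T z))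

/-- The `ε`-eigenspace `H^ε = {h ∈ H : h^# = ε h}` of an algebra automorphism,
viewed as an `R`-submodule. -/
def fixedSubmodule {R H : Type*} [CommRing R] [Ring H] [Algebra R H]
    (φ : H ≃ₐ[R] H) (ε : R) : Submodule R H where
  carrier := {x | φ x = ε • x}
  add_mem' := by
    intro a b ha hb
    simp only [Set.mem_setOf_eq] at *
    rw [map_add, ha, hb, smul_add]
  zero_mem' := by simp
  smul_mem' := by
    intro c a ha
    simp only [Set.mem_setOf_eq] at *
    rw [map_smul, ha, smul_smul, smul_smul, mul_comm]


/-!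
Filter `H` by length: `F k` is the span of the `T y` with `ℓ(y) < k`. Right multiplication by
`T s` raises the filtration degree by at most one, and `T s⁻¹ = T s - (q - q⁻¹)`, so multiplying
out a reduced word gives `T w⁻¹ ≡ T (w⁻¹) (mod F ℓ(w))`. Hence `A z = ½ (T z + (T z⁻¹)⁻¹)` is
congruent to `T z` modulo `F ℓ(z)`: the family `A` is unitriangular with respect to the basis `T`,
so it spans by induction on length, and it is independent because a surjective endomorphism of a
finite free module over a commutative ring is injective.

Since `A z # = ε_z A z`, the even `A z` span a submodule of `H⁺` and the odd ones a submodule of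
`H⁻`. Together they span `H`, while `H⁺ ∩ H⁻ = 0` because `2` is invertible; in the modular
lattice of submodules this forces both inclusions to be equalities.
-/

open Equiv

lemma Ring.inverse_eq_of_mul_eq_one {M₀ : Type*} [MonoidWithZero M₀] {a b : M₀}
    (h₁ : a * b = 1) (h₂ : b * a = 1) : Ring.inverse a = b :=
  Ring.inverse_unit ⟨a, b, h₁, h₂⟩

lemma Ring.inverse_list_prod {M₀ : Type*} [MonoidWithZero M₀] {l : List M₀}
    (hl : ∀ a ∈ l, IsUnit a) : Ring.inverse l.prod = (l.reverse.map Ring.inverse).prod := by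
  induction l with
  | nil => simp
  | cons a l ih =>
    rw [List.prod_cons, Ring.inverse_mul (.inl (hl a (by simp))), ih (by simp_all)]
    simp

lemma map_ringInverse_of_isUnit {F M N : Type*} [MonoidWithZero M] [MonoidWithZero N]
    [FunLike F M N] [MonoidHomClass F M N] (f : F) {a : M} (ha : IsUnit a) :
    f (Ring.inverse a) = Ring.inverse (f a) :=
  (Ring.inverse_eq_of_mul_eq_one (by rw [← map_mul, Ring.mul_inverse_cancel a ha, map_one])
    (by rw [← map_mul, Ring.inverse_mul_cancel a ha, map_one])).symm

lemma neg_one_pow_mul_self {M : Type*} [Monoid M] [HasDistribNeg M] (k : ℕ) :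
    (-1 : M) ^ k * (-1) ^ k = 1 := by
  rw [← pow_add]
  exact Even.neg_one_pow ⟨k, rfl⟩

section

open Submodule

variable {ι R M : Type*}

lemma Module.Basis.span_eq_top_of_sub_mem_span_lt [Ring R] [AddCommGroup M] [Module R M] (b : Module.Basis ι R M) (d : ι → ℕ)
    {v : ι → M} (hv : ∀ i, v i - b i ∈ span R (b '' {j | d j < d i})) :
    span R (Set.range v) = ⊤ := by
  have hb : ∀ k i, d i < k → b i ∈ span R (Set.range v) := by
    intro k
    induction k with
    | zero => simp
    | succ k ih =>
      intro i hi
      have hlow : span R (b '' {j | d j < d i}) ≤ span R (Set.range v) :=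
        span_le.2 (Set.image_subset_iff.2 fun j hj ↦ ih j (lt_of_lt_of_le hj (by omega)))
      simpa using sub_mem (subset_span (Set.mem_range_self i)) (hlow (hv i))
  rw [eq_top_iff, ← b.span_eq, span_le]
  rintro _ ⟨i, rfl⟩
  exact hb _ i (Nat.lt_succ_self _)

lemma Module.Basis.linearIndependent_of_span_eq_top [Semiring R] [OrzechProperty R]
    [AddCommMonoid M] [Module R M] [Finite ι] (b : Module.Basis ι R M)
    {v : ι → M} (hv : span R (Set.range v) = ⊤) : LinearIndependent R v := by
  rw [← Finsupp.range_linearCombination, LinearMap.range_eq_top] at hv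
  have hinj := OrzechProperty.injective_of_surjective_endomorphism
    (b.repr.toLinearMap ∘ₗ Finsupp.linearCombination R v) (b.repr.surjective.comp hv)
  rw [LinearMap.coe_comp] at hinj
  exact hinj.of_comp

lemma span_range_subtype_sup_span_range_subtype_not [Semiring R] [AddCommMonoid M] [Module R M]
    (v : ι → M) (p : ι → Prop) :
    span R (Set.range fun i : {i // p i} ↦ v i) ⊔
      span R (Set.range fun i : {i // ¬ p i} ↦ v i) = span R (Set.range v) := by
  rw [← span_union]
  congr 1
  ext x
  simp only [Set.mem_union, Set.mem_range, Subtype.exists, exists_prop]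
  grind

end

lemma eq_of_le_of_le_of_codisjoint_of_disjoint {α : Type*} [Lattice α] [BoundedOrder α]
    [IsModularLattice α] {a b c d : α} (hac : a ≤ c) (hbd : b ≤ d) (hab : Codisjoint a b)
    (hcd : Disjoint c d) : a = c ∧ b = d :=
  ⟨(le_iff_eq_of_codisjoint_of_disjoint hab (hcd.symm.mono_left hbd)).1 hac,
    (le_iff_eq_of_codisjoint_of_disjoint hab.symm (hcd.mono_left hac)).1 hbd⟩

lemma disjoint_fixedSubmodule_one_neg_one {R H : Type*} [CommRing R] [Ring H] [Algebra R H]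
    (h2 : IsUnit (2 : R)) (φ : H ≃ₐ[R] H) :
    Disjoint (fixedSubmodule φ 1) (fixedSubmodule φ (-1)) := by
  rw [Submodule.disjoint_def]
  intro x (h₁ : φ x = (1 : R) • x) (h₂ : φ x = (-1 : R) • x)
  have hx : x = -x := by rw [← neg_one_smul R x, ← h₂, h₁, one_smul]
  have h2x : (2 : R) • x = (2 : R) • 0 := by
    rw [two_smul, smul_zero]
    nth_rewrite 2 [hx]
    exact add_neg_cancel x
  exact h2.smul_left_cancel.mp h2x

section Words

variable {n : ℕ}

def wordPerm (n : ℕ) (l : List ℕ) : Perm (Fin n) := (l.map (sTr n)).prod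

def IsReducedWord (n : ℕ) (l : List ℕ) : Prop :=
  (∀ i ∈ l, i + 1 < n) ∧ len n (wordPerm n l) = l.length

@[simp]
lemma sTr_mul_self (n i : ℕ) : sTr n i * sTr n i = 1 := by
  unfold sTr
  split <;> simp

@[simp]
lemma wordPerm_nil : wordPerm n [] = 1 := rfl

@[simp]
lemma wordPerm_append (l₁ l₂ : List ℕ) :
    wordPerm n (l₁ ++ l₂) = wordPerm n l₁ * wordPerm n l₂ := by
  simp [wordPerm]

@[simp]
lemma wordPerm_singleton (i : ℕ) : wordPerm n [i] = sTr n i := by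
  simp [wordPerm]

@[simp]
lemma sTr_inv (n i : ℕ) : (sTr n i)⁻¹ = sTr n i :=
  inv_eq_of_mul_eq_one_right (sTr_mul_self n i)

lemma wordPerm_reverse (l : List ℕ) : wordPerm n l.reverse = (wordPerm n l)⁻¹ := by
  simp [wordPerm, List.prod_inv_reverse, Function.comp_def]

lemma exists_wordPerm_eq (w : Perm (Fin n)) :
    ∃ l, (∀ i ∈ l, i + 1 < n) ∧ wordPerm n l = w := by
  cases n with
  | zero => exact ⟨[], by simp, Subsingleton.elim _ _⟩
  | succ m =>
    have hw : w ∈ Submonoid.closure (Set.range fun i : Fin m ↦ swap i.castSucc i.succ) := by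
      rw [Perm.mclosure_swap_castSucc_succ]; trivial
    induction hw using Submonoid.closure_induction with
    | mem _ hx =>
      obtain ⟨i, rfl⟩ := hx
      refine ⟨[i], by simp, ?_⟩
      simp [sTr, Fin.castSucc, Fin.succ, Fin.castAdd, Fin.castLE]
    | one => exact ⟨[], by simp, rfl⟩
    | mul _ _ _ _ hx hy =>
      obtain ⟨lx, hlx, rfl⟩ := hx
      obtain ⟨ly, hly, rfl⟩ := hy
      exact ⟨lx ++ ly, by simp_all [or_imp], wordPerm_append lx ly⟩

lemma len_le_length {l : List ℕ} (hl : ∀ i ∈ l, i + 1 < n) :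
    len n (wordPerm n l) ≤ l.length :=
  Nat.sInf_le ⟨l, rfl, hl, rfl⟩

lemma exists_isReducedWord (w : Perm (Fin n)) : ∃ l, IsReducedWord n l ∧ wordPerm n l = w := by
  obtain ⟨l, hl, hlen, hw⟩ : len n w ∈ {k | ∃ l : List ℕ, l.length = k ∧
      (∀ i ∈ l, i + 1 < n) ∧ w = (l.map (sTr n)).prod} := by
    obtain ⟨l, hl, hw⟩ := exists_wordPerm_eq w
    exact Nat.sInf_mem ⟨l.length, l, rfl, hl, hw.symm⟩
  exact ⟨l, ⟨hlen, by rw [wordPerm, ← hw, hl]⟩, hw.symm⟩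

@[simp]
lemma len_one : len n 1 = 0 :=
  Nat.le_zero.mp (len_le_length (l := []) (by simp))

lemma len_mul_le (v w : Perm (Fin n)) : len n (v * w) ≤ len n v + len n w := by
  obtain ⟨lv, ⟨hlv, hv⟩, rfl⟩ := exists_isReducedWord v
  obtain ⟨lw, ⟨hlw, hw⟩, rfl⟩ := exists_isReducedWord w
  rw [hv, hw, ← List.length_append, ← wordPerm_append]
  exact len_le_length (by simp_all [or_imp])

lemma len_inv_le (w : Perm (Fin n)) : len n w⁻¹ ≤ len n w := by
  obtain ⟨l, ⟨hl, hw⟩, rfl⟩ := exists_isReducedWord w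
  rw [hw, ← wordPerm_reverse, ← List.length_reverse]
  exact len_le_length (by simpa using hl)

@[simp]
lemma len_inv (w : Perm (Fin n)) : len n w⁻¹ = len n w :=
  le_antisymm (len_inv_le w) (by simpa using len_inv_le w⁻¹)

lemma sign_sTr {i : ℕ} (hi : i + 1 < n) : Perm.sign (sTr n i) = -1 := by
  rw [sTr, dif_pos hi, Perm.sign_swap (by simp [Fin.ext_iff])]

lemma sign_wordPerm {l : List ℕ} (hl : ∀ i ∈ l, i + 1 < n) :
    Perm.sign (wordPerm n l) = (-1) ^ l.length := by
  induction l with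
  | nil => simp
  | cons i l ih =>
    rw [← List.singleton_append, wordPerm_append, map_mul, ih (by simp_all), wordPerm_singleton,
      sign_sTr (hl i (by simp)), List.length_append, pow_add]
    simp

lemma sign_eq_neg_one_pow_len (w : Perm (Fin n)) : Perm.sign w = (-1) ^ len n w := by
  obtain ⟨l, hl, rfl⟩ := exists_isReducedWord w
  rw [sign_wordPerm hl.1, hl.2]

lemma len_mul_sTr {i : ℕ} (hi : i + 1 < n) (w : Perm (Fin n)) :
    len n (w * sTr n i) = len n w + 1 ∨ len n (w * sTr n i) + 1 = len n w := by
  have hs : len n (sTr n i) ≤ 1 := by simpa using len_le_length (n := n) (l := [i]) (by simpa)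
  have h₁ := len_mul_le w (sTr n i)
  have h₂ := len_mul_le (w * sTr n i) (sTr n i)
  rw [mul_assoc, sTr_mul_self, mul_one] at h₂
  have hne : len n (w * sTr n i) ≠ len n w := by
    intro h
    have hsign := map_mul Perm.sign w (sTr n i)
    rw [sign_eq_neg_one_pow_len, sign_eq_neg_one_pow_len w, h, sign_sTr hi, mul_neg_one] at hsign
    exact units_ne_neg_self _ hsign
  omega

lemma len_sTr {i : ℕ} (hi : i + 1 < n) : len n (sTr n i) = 1 := by
  simpa using len_mul_sTr hi 1

lemma IsReducedWord.reverse {l : List ℕ} (h : IsReducedWord n l) : IsReducedWord n l.reverse :=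
  ⟨by simpa using h.1, by rw [wordPerm_reverse, len_inv, h.2, List.length_reverse]⟩

lemma IsReducedWord.of_append_singleton {l : List ℕ} {i : ℕ} (h : IsReducedWord n (l ++ [i])) :
    IsReducedWord n l ∧ len n (wordPerm n l * sTr n i) = len n (wordPerm n l) + 1 := by
  have hl : ∀ j ∈ l, j + 1 < n := fun j hj ↦ h.1 j (by simp [hj])
  have hlen := h.2
  rw [wordPerm_append, wordPerm_singleton, List.length_append, List.length_singleton] at hlen
  have := len_le_length hl
  have := len_mul_le (wordPerm n l) (sTr n i)
  have := len_sTr (h.1 i (by simp))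
  exact ⟨⟨hl, by omega⟩, by omega⟩

end Words

section Hecke

variable {R H : Type*} [CommRing R] [Ring H] [Algebra R H] {n : ℕ}

structure IsHeckeFamily (q : R) (T : Perm (Fin n) → H) : Prop where
  map_one : T 1 = 1
  mul_sTr_of_len_succ : ∀ (w : Perm (Fin n)) (i : ℕ), i + 1 < n →
    len n (w * sTr n i) = len n w + 1 → T w * T (sTr n i) = T (w * sTr n i)
  mul_sTr_of_len_pred : ∀ (w : Perm (Fin n)) (i : ℕ), i + 1 < n →
    len n (w * sTr n i) + 1 = len n w →
    T w * T (sTr n i) = T (w * sTr n i) + (q - Ring.inverse q) • T w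

variable (R) in
def lenFiltration (T : Perm (Fin n) → H) (k : ℕ) : Submodule R H :=
  Submodule.span R (T '' {y | len n y < k})

variable {q : R} {T : Perm (Fin n) → H}

lemma lenFiltration_mono (T : Perm (Fin n) → H) : Monotone (lenFiltration R T) :=
  fun _ _ h ↦ Submodule.span_mono (Set.image_mono fun _ hy ↦ lt_of_lt_of_le hy h)

lemma T_mem_lenFiltration {y : Perm (Fin n)} {k : ℕ} (h : len n y < k) :
    T y ∈ lenFiltration R T k :=
  Submodule.subset_span ⟨y, h, rfl⟩

namespace IsHeckeFamily

variable (hT : IsHeckeFamily q T)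
include hT

lemma mul_T_sTr_mem {k : ℕ} {x : H} (hx : x ∈ lenFiltration R T k) {i : ℕ} (hi : i + 1 < n) :
    x * T (sTr n i) ∈ lenFiltration R T (k + 1) := by
  induction hx using Submodule.span_induction with
  | mem _ hx =>
    obtain ⟨y, hy, rfl⟩ := hx
    have hy : len n y < k := hy
    rcases len_mul_sTr hi y with h | h
    · rw [hT.mul_sTr_of_len_succ y i hi h]
      exact T_mem_lenFiltration (by omega)
    · rw [hT.mul_sTr_of_len_pred y i hi h]
      exact add_mem (T_mem_lenFiltration (by omega))
        (Submodule.smul_mem _ _ (T_mem_lenFiltration (by omega)))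
  | zero => simp
  | add _ _ _ _ hx hy => rw [add_mul]; exact add_mem hx hy
  | smul r _ _ hx => rw [smul_mul_assoc]; exact Submodule.smul_mem _ r hx

lemma prod_T_sTr_mem {l : List ℕ} (hl : ∀ i ∈ l, i + 1 < n) :
    (l.map fun i ↦ T (sTr n i)).prod ∈ lenFiltration R T (l.length + 1) := by
  induction l using List.reverseRecOn with
  | nil =>
    simpa [hT.map_one] using T_mem_lenFiltration (R := R) (T := T) (y := 1) (k := 1) (by simp)
  | append_singleton l i ih =>
    simpa using hT.mul_T_sTr_mem (ih fun j hj ↦ hl j (by simp [hj])) (hl i (by simp))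

lemma prod_sub_smul_one_sub_prod_mem (c : R) {l : List ℕ} (hl : ∀ i ∈ l, i + 1 < n) :
    (l.map fun i ↦ T (sTr n i) - c • 1).prod - (l.map fun i ↦ T (sTr n i)).prod ∈
      lenFiltration R T l.length := by
  induction l using List.reverseRecOn with
  | nil => simp
  | append_singleton l i ih =>
    have hl' : ∀ j ∈ l, j + 1 < n := fun j hj ↦ hl j (by simp [hj])
    have hPQ := ih hl'
    have hP := add_mem (lenFiltration_mono T (Nat.le_succ _) hPQ) (hT.prod_T_sTr_mem hl')
    rw [sub_add_cancel] at hP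
    have key : ∀ P Q : H, P * (T (sTr n i) - c • 1) - Q * T (sTr n i) =
        (P - Q) * T (sTr n i) - c • P := fun P Q ↦ by
      simp only [mul_sub, sub_mul, mul_smul_comm, mul_one]
      abel
    simp only [List.map_append, List.prod_append, List.map_singleton, List.prod_singleton,
      List.length_append, List.length_singleton, key]
    exact sub_mem (hT.mul_T_sTr_mem hPQ (hl i (by simp))) (Submodule.smul_mem _ c hP)

lemma T_wordPerm {l : List ℕ} (hl : IsReducedWord n l) :
    T (wordPerm n l) = (l.map fun i ↦ T (sTr n i)).prod := by
  induction l using List.reverseRecOn with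
  | nil => simp [hT.map_one]
  | append_singleton l i ih =>
    obtain ⟨hl', hlen⟩ := hl.of_append_singleton
    rw [wordPerm_append, wordPerm_singleton,
      ← hT.mul_sTr_of_len_succ _ i (hl.1 i (by simp)) hlen, ih hl']
    simp

lemma T_sTr_mul_self {i : ℕ} (hi : i + 1 < n) :
    T (sTr n i) * T (sTr n i) = 1 + (q - Ring.inverse q) • T (sTr n i) := by
  rw [hT.mul_sTr_of_len_pred _ i hi (by simp [len_sTr hi]), sTr_mul_self, hT.map_one]

lemma T_sTr_mul_sub {i : ℕ} (hi : i + 1 < n) :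
    T (sTr n i) * (T (sTr n i) - (q - Ring.inverse q) • 1) = 1 := by
  rw [mul_sub, hT.T_sTr_mul_self hi, mul_smul_comm, mul_one, add_sub_cancel_right]

lemma sub_mul_T_sTr {i : ℕ} (hi : i + 1 < n) :
    (T (sTr n i) - (q - Ring.inverse q) • 1) * T (sTr n i) = 1 := by
  rw [sub_mul, hT.T_sTr_mul_self hi, smul_mul_assoc, one_mul, add_sub_cancel_right]

lemma isUnit_T_sTr {i : ℕ} (hi : i + 1 < n) : IsUnit (T (sTr n i)) :=
  ⟨⟨_, _, hT.T_sTr_mul_sub hi, hT.sub_mul_T_sTr hi⟩, rfl⟩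

lemma ringInverse_T_sTr {i : ℕ} (hi : i + 1 < n) :
    Ring.inverse (T (sTr n i)) = T (sTr n i) - (q - Ring.inverse q) • 1 :=
  Ring.inverse_eq_of_mul_eq_one (hT.T_sTr_mul_sub hi) (hT.sub_mul_T_sTr hi)

lemma isUnit_T (w : Perm (Fin n)) : IsUnit (T w) := by
  obtain ⟨l, hl, rfl⟩ := exists_isReducedWord w
  rw [hT.T_wordPerm hl]
  exact List.prod_isUnit (by simpa using fun i hi ↦ hT.isUnit_T_sTr (hl.1 i hi))

lemma ringInverse_T_sub_T_inv_mem (w : Perm (Fin n)) :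
    Ring.inverse (T w) - T w⁻¹ ∈ lenFiltration R T (len n w) := by
  obtain ⟨l, hl, rfl⟩ := exists_isReducedWord w
  have hinv : Ring.inverse (T (wordPerm n l)) =
      (l.reverse.map fun i ↦ T (sTr n i) - (q - Ring.inverse q) • 1).prod := by
    rw [hT.T_wordPerm hl, Ring.inverse_list_prod
      (by simpa using fun i hi ↦ hT.isUnit_T_sTr (hl.1 i hi))]
    simp only [← List.map_reverse, List.map_map]
    exact congrArg List.prod (List.map_congr_left fun i hi ↦
      hT.ringInverse_T_sTr (hl.1 i (List.mem_reverse.mp hi)))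
  rw [hinv, ← wordPerm_reverse, hT.T_wordPerm hl.reverse, hl.2, ← List.length_reverse]
  exact hT.prod_sub_smul_one_sub_prod_mem _ hl.reverse.1

end IsHeckeFamily

variable {hash : H ≃ₐ[R] H}

lemma Aelt_eq (hhash : ∀ w, hash (T w) = ((-1 : R) ^ len n w) • Ring.inverse (T w⁻¹))
    (z : Perm (Fin n)) :
    Aelt n T hash z = Ring.inverse (2 : R) • (T z + Ring.inverse (T z⁻¹)) := by
  rw [Aelt, hhash, smul_smul, neg_one_pow_mul_self, one_smul]

namespace IsHeckeFamily

variable (hT : IsHeckeFamily q T)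
  (hhash : ∀ w, hash (T w) = ((-1 : R) ^ len n w) • Ring.inverse (T w⁻¹))
include hT hhash

lemma hash_hash_T (w : Perm (Fin n)) : hash (hash (T w)) = T w := by
  rw [hhash, map_smul, map_ringInverse_of_isUnit hash (hT.isUnit_T _), hhash, inv_inv, len_inv,
    Ring.inverse_eq_of_mul_eq_one (b := (-1 : R) ^ len n w • T w), smul_smul,
    neg_one_pow_mul_self, one_smul]
  · rw [smul_mul_smul_comm, neg_one_pow_mul_self, Ring.inverse_mul_cancel _ (hT.isUnit_T w),
      one_smul]
  · rw [smul_mul_smul_comm, neg_one_pow_mul_self, Ring.mul_inverse_cancel _ (hT.isUnit_T w),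
      one_smul]

lemma hash_Aelt (z : Perm (Fin n)) :
    hash (Aelt n T hash z) = ((-1 : R) ^ len n z) • Aelt n T hash z := by
  rw [Aelt, map_smul, map_add, map_smul, hT.hash_hash_T hhash, smul_comm _ (Ring.inverse 2)]
  congr 1
  rw [smul_add, smul_smul, neg_one_pow_mul_self, one_smul, add_comm]

lemma Aelt_sub_T_mem (h2 : IsUnit (2 : R)) (z : Perm (Fin n)) :
    Aelt n T hash z - T z ∈ lenFiltration R T (len n z) := by
  have hmem := hT.ringInverse_T_sub_T_inv_mem z⁻¹
  rw [inv_inv, len_inv] at hmem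
  have hhalf : Ring.inverse (2 : R) • T z + Ring.inverse (2 : R) • T z = T z := by
    rw [← add_smul, ← two_mul, Ring.mul_inverse_cancel _ h2, one_smul]
  have key : Aelt n T hash z - T z = Ring.inverse (2 : R) • (Ring.inverse (T z⁻¹) - T z) := by
    rw [Aelt_eq hhash]
    linear_combination (norm := module) hhalf
  rw [key]
  exact Submodule.smul_mem _ _ hmem

end IsHeckeFamily

end Hecke

theorem Aelt_basis_of_alternatingHecke_general
    {R : Type*} [CommRing R] (q : R) (h2 : IsUnit (2 : R))
    (n : ℕ) {H : Type*} [Ring H] [Algebra R H]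
    -- the Iwahori–Hecke algebra of type A with its basis of standard elements T_w
    (T : Equiv.Perm (Fin n) → H)
    (bT : Module.Basis (Equiv.Perm (Fin n)) R H) (hbT : ∀ w, bT w = T w)
    (hT1 : T 1 = 1)
    (hmul1 : ∀ (w : Equiv.Perm (Fin n)) (i : ℕ), i + 1 < n →
      len n (w * sTr n i) = len n w + 1 → T w * T (sTr n i) = T (w * sTr n i))
    (hmul2 : ∀ (w : Equiv.Perm (Fin n)) (i : ℕ), i + 1 < n →
      len n (w * sTr n i) + 1 = len n w →
      T w * T (sTr n i) = T (w * sTr n i) + (q - Ring.inverse q) • T w)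
    -- the hash involution
    (hash : H ≃ₐ[R] H)
    (hhash : ∀ w, hash (T w) = ((-1 : R) ^ len n w) • Ring.inverse (T w⁻¹)) :
    -- (a) {A_z : z even} is a basis of H⁺ = 𝒜ₙ(q)
    (LinearIndependent R
        (fun z : {z : Equiv.Perm (Fin n) // Even (len n z)} => Aelt n T hash z.val) ∧
      Submodule.span R
          (Set.range fun z : {z : Equiv.Perm (Fin n) // Even (len n z)} =>
            Aelt n T hash z.val)
        = fixedSubmodule hash 1) ∧
    -- (b) {A_z : z odd} is a basis of H⁻
    (LinearIndependent R
        (fun z : {z : Equiv.Perm (Fin n) // ¬ Even (len n z)} => Aelt n T hash z.val) ∧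
      Submodule.span R
          (Set.range fun z : {z : Equiv.Perm (Fin n) // ¬ Even (len n z)} =>
            Aelt n T hash z.val)
        = fixedSubmodule hash (-1)) ∧
    -- (c) H = H⁺ ⊕ H⁻ as an R-module
    IsCompl (fixedSubmodule hash 1) (fixedSubmodule hash (-1)) := by
  have hT : IsHeckeFamily q T := ⟨hT1, hmul1, hmul2⟩
  obtain rfl : ⇑bT = T := funext hbT
  have hspan := bT.span_eq_top_of_sub_mem_span_lt (len n) (hT.Aelt_sub_T_mem hhash h2)
  have hli := bT.linearIndependent_of_span_eq_top hspan
  have heven : Submodule.span R (Set.range fun z : {z // Even (len n z)} ↦ Aelt n bT hash z.val)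
      ≤ fixedSubmodule hash 1 := by
    rw [Submodule.span_le]
    rintro _ ⟨z, rfl⟩
    exact (hT.hash_Aelt hhash z).trans (by rw [z.2.neg_one_pow])
  have hodd : Submodule.span R (Set.range fun z : {z // ¬ Even (len n z)} ↦ Aelt n bT hash z.val)
      ≤ fixedSubmodule hash (-1) := by
    rw [Submodule.span_le]
    rintro _ ⟨z, rfl⟩
    exact (hT.hash_Aelt hhash z).trans (by rw [(Nat.not_even_iff_odd.1 z.2).neg_one_pow])
  have hcodisj := codisjoint_iff.2 <|
    (span_range_subtype_sup_span_range_subtype_not _ fun z ↦ Even (len n z)).trans hspan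
  have hdisj := disjoint_fixedSubmodule_one_neg_one h2 hash
  obtain ⟨hP, hN⟩ := eq_of_le_of_le_of_codisjoint_of_disjoint heven hodd hcodisj hdisj
  refine ⟨⟨hli.comp _ Subtype.val_injective, hP⟩, ⟨hli.comp _ Subtype.val_injective, hN⟩,
    hdisj, ?_⟩
  rwa [← hP, ← hN]

/-- Proposition `AnBasis`: `{A_z : z ∈ 𝔄ₙ}` is an `R`-basis of the
alternating Hecke algebra `𝒜ₙ(q) = H⁺`, `{A_z : z ∈ 𝔖ₙ ∖ 𝔄ₙ}` is an `R`-basis of `H⁻`,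
and, as an `R`-module, `H = H⁺ ⊕ H⁻`. -/
theorem Aelt_basis_of_alternatingHecke
    {R : Type*} [CommRing R] (q : R) (hq : IsUnit q) (hq1 : q ≠ 1) (h2 : IsUnit (2 : R))
    (n : ℕ) {H : Type*} [Ring H] [Algebra R H]
    -- the Iwahori–Hecke algebra of type A with its basis of standard elements T_w
    (T : Equiv.Perm (Fin n) → H)
    (bT : Module.Basis (Equiv.Perm (Fin n)) R H) (hbT : ∀ w, bT w = T w)
    (hT1 : T 1 = 1)
    (hTunit : ∀ w, IsUnit (T w))
    (hmul1 : ∀ (w : Equiv.Perm (Fin n)) (i : ℕ), i + 1 < n →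
      len n (w * sTr n i) = len n w + 1 → T w * T (sTr n i) = T (w * sTr n i))
    (hmul2 : ∀ (w : Equiv.Perm (Fin n)) (i : ℕ), i + 1 < n →
      len n (w * sTr n i) + 1 = len n w →
      T w * T (sTr n i) = T (w * sTr n i) + (q - Ring.inverse q) • T w)
    -- the hash involution
    (hash : H ≃ₐ[R] H)
    (hhash : ∀ w, hash (T w) = ((-1 : R) ^ len n w) • Ring.inverse (T w⁻¹))
    (hn : 1 ≤ n) :
    -- (a) {A_z : z even} is a basis of H⁺ = 𝒜ₙ(q)
    (LinearIndependent R
        (fun z : {z : Equiv.Perm (Fin n) // Even (len n z)} => Aelt n T hash z.val) ∧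
      Submodule.span R
          (Set.range fun z : {z : Equiv.Perm (Fin n) // Even (len n z)} =>
            Aelt n T hash z.val)
        = fixedSubmodule hash 1) ∧
    -- (b) {A_z : z odd} is a basis of H⁻
    (LinearIndependent R
        (fun z : {z : Equiv.Perm (Fin n) // ¬ Even (len n z)} => Aelt n T hash z.val) ∧
      Submodule.span R
          (Set.range fun z : {z : Equiv.Perm (Fin n) // ¬ Even (len n z)} =>
            Aelt n T hash z.val)
        = fixedSubmodule hash (-1)) ∧
    -- (c) H = H⁺ ⊕ H⁻ as an R-module
    IsCompl (fixedSubmodule hash 1) (fixedSubmodule hash (-1)) :=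
  Aelt_basis_of_alternatingHecke_general q h2 n T bT hbT hT1 hmul1 hmul2 hash hhash
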